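/- Let f: [0,∞) → ℝ be continuous with support contained in [0,1], and let Λ > 0. Define R_0^Λ(x) = (Λ³/(8π²)) f(|x|²Λ²) + (1/(8π²))·(Λ³ if |x| ≤ 1/Λ, |x|^{−3} if |x| > 1/Λ). Then ∫_{B_{1/σ}} (R_0^Λ(x))² dx = Λ·α₀(f) − σ/(3·8π²), where α₀(f) = ∫_{ℝ⁵} (R_0^1(x))² dx and 0 < σ ≤ Λ. -/

import Mathlib

/-! Scaling gives `R₀^Λ(x) = Λ³ R₀^1(Λx)`, so the integral over `B_{1/σ}` is `Λ` times the
integral of `(R₀^1)²` over `B_{Λ/σ}`, and `Λ/σ ≥ 1`. Beyond radius `1` the bump `f` is switched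
off and `(R₀^1)² = (8π²)⁻² |x|⁻⁶`; in polar coordinates its integral over `|x| > R` in `ℝ⁵` is
`(8π²)⁻² · 5|B₁| · ∫_R^∞ r⁻² dr = 1/(3·8π²R)`, since `|B₁| = 8π²/15`. -/

open MeasureTheory Real

/-- The deformed (cutoff-regularized) Green's function
`R₀^Λ(x) = (Λ³/(8π²)) f(|x|²Λ²) + (1/(8π²)) (Λ³ if |x| ≤ 1/Λ, |x|⁻³ otherwise)`. -/
noncomputable def R0L (f : ℝ → ℝ) (Λ : ℝ) (x : EuclideanSpace ℝ (Fin 5)) : ℝ :=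
  (Λ ^ 3 / (8 * π ^ 2)) * f (‖x‖ ^ 2 * Λ ^ 2) +
    (1 / (8 * π ^ 2)) * (if ‖x‖ ≤ 1 / Λ then Λ ^ 3 else ‖x‖⁻¹ ^ 3)

open Set Metric Module Pointwise

lemma indicator_compl_closedBall_norm_rpow_neg {E : Type*} [SeminormedAddCommGroup E]
    (s R : ℝ) :
    (closedBall (0 : E) R)ᶜ.indicator (fun x => ‖x‖ ^ (-s))
      = fun x => (Ioi R).indicator (fun r => r ^ (-s)) ‖x‖ := by
  ext x
  by_cases h : R < ‖x‖ <;> simp [indicator, h]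

lemma eqOn_pow_smul_indicator_rpow_neg {n : ℕ} (hn : 0 < n) (s R : ℝ) :
    EqOn (fun y : ℝ => y ^ (n - 1) • (Ioi R).indicator (fun r => r ^ (-s)) y)
      ((Ioi R).indicator fun y => y ^ ((n : ℝ) - 1 - s)) (Ioi 0) := by
  intro y (hy : 0 < y)
  by_cases hyR : R < y
  · simp only [indicator_of_mem (mem_Ioi.2 hyR), smul_eq_mul, ← rpow_natCast,
      Nat.cast_pred hn, ← rpow_add hy, sub_eq_add_neg]
  · simp [hyR]

section RadialTail

variable {E : Type*} [NormedAddCommGroup E] [NormedSpace ℝ E] [Nontrivial E]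
  [FiniteDimensional ℝ E] [MeasurableSpace E] [BorelSpace E] (μ : Measure E)
  [μ.IsAddHaarMeasure] {s R : ℝ}

lemma integrableOn_compl_closedBall_norm_rpow_neg (hs : finrank ℝ E < s) (hR : 0 < R) :
    IntegrableOn (fun x : E => ‖x‖ ^ (-s)) (closedBall 0 R)ᶜ μ := by
  rw [← integrable_indicator_iff measurableSet_closedBall.compl,
    indicator_compl_closedBall_norm_rpow_neg, integrable_fun_norm_addHaar μ,
    integrableOn_congr_fun (eqOn_pow_smul_indicator_rpow_neg finrank_pos s R) measurableSet_Ioi]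
  refine (integrable_indicator_iff measurableSet_Ioi).2 ?_ |>.integrableOn
  exact integrableOn_Ioi_rpow_of_lt (by linarith) hR

lemma setIntegral_compl_closedBall_norm_rpow_neg (hs : finrank ℝ E < s) (hR : 0 < R) :
    ∫ x in (closedBall (0 : E) R)ᶜ, ‖x‖ ^ (-s) ∂μ
      = finrank ℝ E * μ.real (ball 0 1) * R ^ ((finrank ℝ E : ℝ) - s) / (s - finrank ℝ E) := by
  rw [← integral_indicator measurableSet_closedBall.compl,
    indicator_compl_closedBall_norm_rpow_neg, integral_fun_norm_addHaar μ,
    setIntegral_congr_fun measurableSet_Ioi (eqOn_pow_smul_indicator_rpow_neg finrank_pos s R),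
    setIntegral_indicator measurableSet_Ioi, Ioi_inter_Ioi, max_eq_right hR.le,
    integral_Ioi_rpow_of_lt (by linarith) hR, nsmul_eq_mul, smul_eq_mul,
    show (finrank ℝ E : ℝ) - 1 - s + 1 = finrank ℝ E - s by ring, neg_div, ← div_neg, neg_sub]
  ring

end RadialTail

local notation "E⁵" => EuclideanSpace ℝ (Fin 5)

lemma volume_real_ball_zero_one_fin_five :
    volume.real (ball (0 : E⁵) 1) = 8 * π ^ 2 / 15 := by
  rw [measureReal_def, InnerProductSpace.volume_ball_of_dim_odd (k := 2) (by simp)]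
  norm_num [Nat.doubleFactorial]
  rw [ENNReal.toReal_ofReal (by positivity)]
  ring

lemma R0L_eq_smul (f : ℝ → ℝ) {Λ : ℝ} (hΛ : 0 < Λ) (x : E⁵) :
    R0L f Λ x = Λ ^ 3 * R0L f 1 (Λ • x) := by
  have hnorm : ‖Λ • x‖ = Λ * ‖x‖ := by rw [norm_smul, norm_of_nonneg hΛ.le]
  have hiff : Λ * ‖x‖ ≤ 1 / 1 ↔ ‖x‖ ≤ 1 / Λ := by
    rw [div_one, le_div_iff₀ hΛ, mul_comm]
  have harg : (Λ * ‖x‖) ^ 2 * 1 ^ 2 = ‖x‖ ^ 2 * Λ ^ 2 := by ring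
  simp only [R0L, hnorm, harg, if_congr hiff rfl rfl]
  split_ifs with h
  · ring
  · have : ‖x‖ ≠ 0 := fun h0 => h (h0 ▸ by positivity)
    field_simp

lemma R0L_one_sq_of_one_lt_norm {f : ℝ → ℝ} (hsupp : Function.support f ⊆ Icc 0 1)
    {x : E⁵} (hx : 1 < ‖x‖) : R0L f 1 x ^ 2 = (8 * π ^ 2)⁻¹ ^ 2 * ‖x‖ ^ (-6 : ℝ) := by
  have hf : f (‖x‖ ^ 2 * 1 ^ 2) = 0 :=
    Function.notMem_support.1 fun h => by nlinarith [(hsupp h).2]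
  rw [R0L, hf, if_neg (by simpa using hx), rpow_neg (by positivity),
    show (6 : ℝ) = (6 : ℕ) by norm_num, rpow_natCast]
  field_simp
  ring

lemma integrable_R0L_one_sq {f : ℝ → ℝ} (hf : Continuous f)
    (hsupp : Function.support f ⊆ Icc 0 1) : Integrable (fun x : E⁵ => R0L f 1 x ^ 2) := by
  rw [← integrableOn_univ, ← union_compl_self (closedBall (0 : E⁵) 1)]
  refine IntegrableOn.union ?_ ?_
  · have hcont : ContinuousOn (fun x : E⁵ => R0L f 1 x ^ 2) (closedBall 0 1) := by
      refine ContinuousOn.congr (f := fun x : E⁵ =>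
        (1 ^ 3 / (8 * π ^ 2) * f (‖x‖ ^ 2 * 1 ^ 2) + 1 / (8 * π ^ 2) * 1 ^ 3) ^ 2)
        (by fun_prop) fun x hx => ?_
      rw [R0L, if_pos (by simpa using hx)]
    exact hcont.integrableOn_compact (isCompact_closedBall _ _)
  · have htail : IntegrableOn (fun x : E⁵ => (8 * π ^ 2)⁻¹ ^ 2 * ‖x‖ ^ (-6 : ℝ))
        (closedBall 0 1)ᶜ :=
      (integrableOn_compl_closedBall_norm_rpow_neg volume (by simp; norm_num) one_pos).const_mul _
    refine htail.congr_fun (fun x hx => ?_) measurableSet_closedBall.compl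
    exact (R0L_one_sq_of_one_lt_norm hsupp (by simpa using hx)).symm

lemma setIntegral_compl_closedBall_R0L_one_sq {f : ℝ → ℝ}
    (hsupp : Function.support f ⊆ Icc 0 1) {R : ℝ} (hR : 1 ≤ R) :
    ∫ x in (closedBall (0 : E⁵) R)ᶜ, R0L f 1 x ^ 2 = 1 / (3 * (8 * π ^ 2)) / R := by
  rw [setIntegral_congr_fun measurableSet_closedBall.compl fun x hx =>
      R0L_one_sq_of_one_lt_norm hsupp (hR.trans_lt (by simpa using hx)),
    integral_const_mul,
    setIntegral_compl_closedBall_norm_rpow_neg (s := 6) volume (by simp; norm_num) (by linarith),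
    finrank_euclideanSpace_fin, volume_real_ball_zero_one_fin_five]
  norm_num [rpow_neg_one]
  field_simp
  ring

lemma setIntegral_closedBall_R0L_one_sq {f : ℝ → ℝ} (hf : Continuous f)
    (hsupp : Function.support f ⊆ Icc 0 1) {R : ℝ} (hR : 1 ≤ R) :
    ∫ x in closedBall (0 : E⁵) R, R0L f 1 x ^ 2
      = (∫ x, R0L f 1 x ^ 2) - 1 / (3 * (8 * π ^ 2)) / R := by
  rw [← integral_add_compl measurableSet_closedBall (integrable_R0L_one_sq hf hsupp),
    setIntegral_compl_closedBall_R0L_one_sq hsupp hR, add_sub_cancel_right]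

lemma setIntegral_closedBall_R0L_sq (f : ℝ → ℝ) {Λ r : ℝ} (hΛ : 0 < Λ) (hr : 0 ≤ r) :
    ∫ x in closedBall (0 : E⁵) r, R0L f Λ x ^ 2
      = Λ * ∫ x in closedBall (0 : E⁵) (Λ * r), R0L f 1 x ^ 2 := by
  calc ∫ x in closedBall (0 : E⁵) r, R0L f Λ x ^ 2
      = ∫ x in closedBall (0 : E⁵) r, Λ ^ 6 * R0L f 1 (Λ • x) ^ 2 := by
        refine setIntegral_congr_fun measurableSet_closedBall fun x _ => ?_
        rw [R0L_eq_smul f hΛ]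
        ring
    _ = Λ ^ 6 * ((Λ ^ 5)⁻¹ * ∫ x in Λ • closedBall (0 : E⁵) r, R0L f 1 x ^ 2) := by
        rw [integral_const_mul,
          Measure.setIntegral_comp_smul_of_pos volume (fun y => R0L f 1 y ^ 2) _ hΛ,
          finrank_euclideanSpace_fin, smul_eq_mul]
    _ = Λ * ∫ x in closedBall (0 : E⁵) (Λ * r), R0L f 1 x ^ 2 := by
        rw [smul_closedBall _ _ hr, smul_zero, norm_of_nonneg hΛ.le]
        field_simp

/-- `∫_{B_{1/σ}} (R₀^Λ(x))² dx = Λ α₀(f) − σ/(3·8π²)` for `0 < σ ≤ Λ`, where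
`α₀(f) = ∫_{ℝ⁵} (R₀^1(x))² dx`. -/
theorem stmt6 (f : ℝ → ℝ) (hf : Continuous f) (hsupp : Function.support f ⊆ Set.Icc 0 1)
    (σ Λ : ℝ) (hσ : 0 < σ) (hσΛ : σ ≤ Λ) :
    ∫ x in Metric.closedBall (0 : EuclideanSpace ℝ (Fin 5)) (1 / σ), (R0L f Λ x) ^ 2
      = Λ * (∫ x, (R0L f 1 x) ^ 2) - σ / (3 * (8 * π ^ 2)) := by
  have hΛ : 0 < Λ := hσ.trans_le hσΛ
  have hR : 1 ≤ Λ * (1 / σ) := by rw [mul_one_div, one_le_div hσ]; exact hσΛ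
  rw [setIntegral_closedBall_R0L_sq f hΛ (by positivity),
    setIntegral_closedBall_R0L_one_sq hf hsupp hR]
  field_simp
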